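/- Let φ(z, z̄, u) be a formal power series in (z, z̄, u) ∈ ℂⁿ × ℂⁿ × ℝ^d with values in ℂ^d, without constant and linear terms. Define L̃^w := i(1 - iφ_u)^{-1} φ_z · e(z) where e(z) is the Euler vector field. Then for all integers a ≥ 1, b, c ≥ 0, the derivative polynomial satisfies L̃^w_{z^a z̄^b u^c} = i a φ_{z^a z̄^b u^c} + R_{a,b,c}(φ_*), where R_{a,b,c} is a universal polynomial in the derivative polynomials of φ at 0 of total order less than a+b+c. Consequently, given the formal series L̃^w and the requirement φ_{z̄^b u^c} = 0 for all b, c (no harmonic terms), the formal series φ is uniquely determined. -/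

import Mathlib

/-- The variables `(z, z̄, u)` of the formal power series. -/
abbrev Var (n d : ℕ) := Fin n ⊕ Fin n ⊕ Fin d

/-- Formal partial derivative of a multivariate formal power series. -/
noncomputable def psDeriv {σ : Type*} [DecidableEq σ] (i : σ) (f : MvPowerSeries σ ℂ) :
    MvPowerSeries σ ℂ :=
  fun m => ((m i : ℂ) + 1) * MvPowerSeries.coeff (m + Finsupp.single i 1) f

/-- Degree of a monomial in the `z`-variables. -/
def degZ {n d : ℕ} (m : Var n d →₀ ℕ) : ℕ := ∑ j : Fin n, m (Sum.inl j)

/-- Degree of a monomial in the `z̄`-variables. -/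
def degZb {n d : ℕ} (m : Var n d →₀ ℕ) : ℕ := ∑ j : Fin n, m (Sum.inr (Sum.inl j))

/-- Degree of a monomial in the `u`-variables. -/
def degU {n d : ℕ} (m : Var n d →₀ ℕ) : ℕ := ∑ k : Fin d, m (Sum.inr (Sum.inr k))

/-- The derivative polynomial `h_{z^a z̄^b u^c}` of a formal power series `h`
(formula (4.5)). -/
noncomputable def dpoly {n d : ℕ} (a b c : ℕ) (f : MvPowerSeries (Var n d) ℂ) :
    MvPowerSeries (Var n d) ℂ :=
  fun m => if degZ m = a ∧ degZb m = b ∧ degU m = c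
    then (a.factorial * b.factorial * c.factorial : ℂ) * MvPowerSeries.coeff m f else 0

/-- `φ` has no constant and no linear terms. -/
def NoConstLin {n d : ℕ} (φ : Fin d → MvPowerSeries (Var n d) ℂ) : Prop :=
  ∀ (k : Fin d) (m : Var n d →₀ ℕ), degZ m + degZb m + degU m ≤ 1 →
    MvPowerSeries.coeff m (φ k) = 0

/-- `Lt` is the evaluation `L̃^w = i (1 − iφ_u)⁻¹ φ_z · e(z)` along the Euler vector field,
expressed by the implicit relation `(1 − iφ_u)·L̃^w = i φ_z e(z)` (componentwise). -/
def IsEulerTransversal {n d : ℕ} (φ Lt : Fin d → MvPowerSeries (Var n d) ℂ) : Prop :=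
  ∀ k : Fin d,
    Lt k - Complex.I •
      (∑ l, psDeriv (Sum.inr (Sum.inr l) : Var n d) (φ k) * Lt l) =
    Complex.I • ∑ j, MvPowerSeries.X (Sum.inl j : Var n d) *
      psDeriv (Sum.inl j : Var n d) (φ k)

/-!
Comparing coefficients of `m` in `(1 - iφ_u) L̃^w = i φ_z · e(z)` gives
`L̃^w_m = i · degZ m · φ_m + i · (∑ₗ φ_{u_l} L̃^w_l)_m`. As `φ`, and then `L̃^w`, have no terms
of total degree `≤ 1`, the convolution only involves coefficients of `φ` and `L̃^w` of total
degree `< |m|`, and by induction on the degree those of `L̃^w` are determined by those of `φ`.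
Hence the defect `L̃^w_m - i · degZ m · φ_m` only depends on the lower-order part of `φ`, and,
by a second induction, `φ_m` is recovered from `L̃^w` by dividing by `i · degZ m` unless `m` is
a harmonic monomial (`degZ m = 0`).
-/

open MvPowerSeries Finsupp

section Euler

variable {σ : Type*} [DecidableEq σ]

theorem coeff_psDeriv (i : σ) (f : MvPowerSeries σ ℂ) (m : σ →₀ ℕ) :
    coeff m (psDeriv i f) = ((m i : ℂ) + 1) * coeff (m + single i 1) f := rfl

theorem coeff_X_mul_psDeriv (i : σ) (f : MvPowerSeries σ ℂ) (m : σ →₀ ℕ) :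
    coeff m (X i * psDeriv i f) = (m i : ℂ) * coeff m f := by
  rw [X, coeff_monomial_mul]
  split_ifs with h
  · have hi : 1 ≤ m i := single_le_iff.mp h
    rw [one_mul, coeff_psDeriv, tsub_add_cancel_of_le h, tsub_apply, single_eq_same,
      Nat.cast_sub hi]
    ring
  · have hi : m i = 0 := by
      by_contra hi
      exact h (single_le_iff.mpr (Nat.one_le_iff_ne_zero.mpr hi))
    simp [hi]

end Euler

variable {n d : ℕ}

theorem degZ_add_degZb_add_degU (m : Var n d →₀ ℕ) :
    degZ m + degZb m + degU m = m.degree := by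
  simp only [degZ, degZb, degU, degree_eq_sum, Fintype.sum_sum_type]
  ring

theorem NoConstLin.coeff_eq_zero {φ : Fin d → MvPowerSeries (Var n d) ℂ} (h : NoConstLin φ)
    {m : Var n d →₀ ℕ} (hm : m.degree ≤ 1) (k : Fin d) : coeff m (φ k) = 0 :=
  h k m (by rwa [degZ_add_degZb_add_degU])

theorem NoConstLin.coeff_zero_psDeriv {φ : Fin d → MvPowerSeries (Var n d) ℂ}
    (h : NoConstLin φ) (l k : Fin d) :
    coeff 0 (psDeriv (Sum.inr (Sum.inr l) : Var n d) (φ k)) = 0 := by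
  rw [coeff_psDeriv, zero_add, h.coeff_eq_zero (by simp), mul_zero]

def AgreeBelow (N : ℕ) (f g : Fin d → MvPowerSeries (Var n d) ℂ) : Prop :=
  ∀ m : Var n d →₀ ℕ, m.degree < N → ∀ k, coeff m (f k) = coeff m (g k)

theorem AgreeBelow.mono {N M : ℕ} {f g : Fin d → MvPowerSeries (Var n d) ℂ}
    (h : AgreeBelow N f g) (hMN : M ≤ N) : AgreeBelow M f g :=
  fun m hm => h m (hm.trans_le hMN)

theorem eq_of_forall_agreeBelow {f g : Fin d → MvPowerSeries (Var n d) ℂ}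
    (h : ∀ N, AgreeBelow N f g) : f = g :=
  funext fun k => ext fun m => h (m.degree + 1) m (Nat.lt_succ_self _) k

theorem agreeBelow_of_dpoly_eq {f g : Fin d → MvPowerSeries (Var n d) ℂ} {N : ℕ}
    (h : ∀ a b c : ℕ, a + b + c < N → ∀ k, dpoly a b c (f k) = dpoly a b c (g k)) :
    AgreeBelow N f g := by
  intro m hm k
  have hfac : ((degZ m).factorial * (degZb m).factorial * (degU m).factorial : ℂ) ≠ 0 := by
    simp [Nat.factorial_ne_zero]
  have hcoeff := congrArg (coeff m)
    (h (degZ m) (degZb m) (degU m) (by rwa [degZ_add_degZb_add_degU]) k)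
  simp only [dpoly, coeff_apply, and_self, if_true] at hcoeff
  exact mul_left_cancel₀ hfac hcoeff

theorem coeff_sum_psDeriv_mul_congr {φ ψ L L' : Fin d → MvPowerSeries (Var n d) ℂ}
    (hφ : NoConstLin φ) (hψ : NoConstLin ψ)
    (hL : ∀ q : Var n d →₀ ℕ, q.degree ≤ 1 → ∀ l, coeff q (L l) = 0)
    (hL' : ∀ q : Var n d →₀ ℕ, q.degree ≤ 1 → ∀ l, coeff q (L' l) = 0)
    {m : Var n d →₀ ℕ} (hφψ : AgreeBelow m.degree φ ψ) (hLL' : AgreeBelow m.degree L L')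
    (k : Fin d) :
    coeff m (∑ l, psDeriv (Sum.inr (Sum.inr l) : Var n d) (φ k) * L l) =
      coeff m (∑ l, psDeriv (Sum.inr (Sum.inr l) : Var n d) (ψ k) * L' l) := by
  simp only [map_sum, coeff_mul]
  refine Finset.sum_congr rfl fun l _ => Finset.sum_congr rfl fun pq hpq => ?_
  obtain ⟨p, q⟩ := pq
  have hdeg : p.degree + q.degree = m.degree := by
    rw [← map_add, Finset.HasAntidiagonal.mem_antidiagonal.mp hpq]
  rcases eq_or_ne p 0 with rfl | hp
  · rw [hφ.coeff_zero_psDeriv, hψ.coeff_zero_psDeriv, zero_mul, zero_mul]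
  rcases le_or_gt q.degree 1 with hq | hq
  · rw [hL q hq, hL' q hq, mul_zero, mul_zero]
  -- now `q` has degree `≥ 2`, so `p + single (u l) 1` has degree `< m.degree`
  have hp : 0 < p.degree := Nat.pos_of_ne_zero ((degree_eq_zero_iff p).not.mpr hp)
  rw [coeff_psDeriv, coeff_psDeriv, hφψ _ (by simp; omega), hLL' q (by omega)]

namespace IsEulerTransversal

variable {φ ψ L L' : Fin d → MvPowerSeries (Var n d) ℂ}

theorem coeff_eq (h : IsEulerTransversal φ L) (k : Fin d) (m : Var n d →₀ ℕ) :
    coeff m (L k) = Complex.I * degZ m * coeff m (φ k) +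
      Complex.I * coeff m (∑ l, psDeriv (Sum.inr (Sum.inr l) : Var n d) (φ k) * L l) := by
  have hk := congrArg (coeff m) (h k)
  simp only [map_sub, map_smul, map_sum, coeff_X_mul_psDeriv, smul_eq_mul,
    ← Finset.sum_mul] at hk
  rw [degZ, Nat.cast_sum, map_sum]
  linear_combination hk

theorem coeff_eq_zero_of_degree_le_one (h : IsEulerTransversal φ L) (hφ : NoConstLin φ)
    {m : Var n d →₀ ℕ} (hm : m.degree ≤ 1) (k : Fin d) : coeff m (L k) = 0 := by
  induction hN : m.degree using Nat.strong_induction_on generalizing m k with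
  | _ N ih =>
    rw [h.coeff_eq, hφ.coeff_eq_zero hm, map_sum]
    simp only [coeff_mul]
    rw [Finset.sum_eq_zero fun l _ => Finset.sum_eq_zero fun pq hpq => ?_]
    · ring
    obtain ⟨p, q⟩ := pq
    have hdeg : p.degree + q.degree = m.degree := by
      rw [← map_add, Finset.HasAntidiagonal.mem_antidiagonal.mp hpq]
    rcases eq_or_ne p 0 with rfl | hp
    · rw [hφ.coeff_zero_psDeriv, zero_mul]
    have hp : 0 < p.degree := Nat.pos_of_ne_zero ((degree_eq_zero_iff p).not.mpr hp)
    rw [ih q.degree (by omega) (by omega) l rfl, mul_zero]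

theorem agreeBelow (h : IsEulerTransversal φ L) (h' : IsEulerTransversal ψ L')
    (hφ : NoConstLin φ) (hψ : NoConstLin ψ) {N : ℕ} (hφψ : AgreeBelow N φ ψ) :
    AgreeBelow N L L' := by
  intro m hm k
  induction hM : m.degree using Nat.strong_induction_on generalizing m k with
  | _ M ih =>
    rw [h.coeff_eq, h'.coeff_eq, hφψ m hm,
      coeff_sum_psDeriv_mul_congr hφ hψ (fun _ => h.coeff_eq_zero_of_degree_le_one hφ)
        (fun _ => h'.coeff_eq_zero_of_degree_le_one hψ) (hφψ.mono hm.le)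
        (fun q hq l => ih _ (hM ▸ hq) q (by omega) l rfl)]

theorem coeff_sub_eq_of_agreeBelow (h : IsEulerTransversal φ L) (h' : IsEulerTransversal ψ L')
    (hφ : NoConstLin φ) (hψ : NoConstLin ψ) {m : Var n d →₀ ℕ}
    (hφψ : AgreeBelow m.degree φ ψ) (k : Fin d) :
    coeff m (L k) - Complex.I * degZ m * coeff m (φ k) =
      coeff m (L' k) - Complex.I * degZ m * coeff m (ψ k) := by
  rw [h.coeff_eq, h'.coeff_eq,
    coeff_sum_psDeriv_mul_congr hφ hψ (fun _ => h.coeff_eq_zero_of_degree_le_one hφ)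
      (fun _ => h'.coeff_eq_zero_of_degree_le_one hψ) hφψ (h.agreeBelow h' hφ hψ hφψ)]
  ring

theorem dpoly_sub_eq_of_agreeBelow (h : IsEulerTransversal φ L) (h' : IsEulerTransversal ψ L')
    (hφ : NoConstLin φ) (hψ : NoConstLin ψ) {a b c : ℕ} (hφψ : AgreeBelow (a + b + c) φ ψ)
    (k : Fin d) :
    dpoly a b c (L k) - (Complex.I * a) • dpoly a b c (φ k) =
      dpoly a b c (L' k) - (Complex.I * a) • dpoly a b c (ψ k) := by
  ext m
  simp only [map_sub, map_smul, dpoly, coeff_apply, smul_eq_mul]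
  split_ifs with hm
  · obtain ⟨rfl, rfl, rfl⟩ := hm
    have hdefect := h.coeff_sub_eq_of_agreeBelow h' hφ hψ
      (by rwa [← degZ_add_degZb_add_degU]) k
    simp only [coeff_apply] at hdefect
    linear_combination ((degZ m).factorial * (degZb m).factorial * (degU m).factorial : ℂ) *
      hdefect
  · simp

theorem eq_of_coeff_degZ_eq_zero (h : IsEulerTransversal φ L) (h' : IsEulerTransversal ψ L)
    (hφ : NoConstLin φ) (hψ : NoConstLin ψ)
    (hφh : ∀ k (m : Var n d →₀ ℕ), degZ m = 0 → coeff m (φ k) = 0)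
    (hψh : ∀ k (m : Var n d →₀ ℕ), degZ m = 0 → coeff m (ψ k) = 0) : φ = ψ := by
  refine eq_of_forall_agreeBelow fun N => ?_
  induction N with
  | zero => exact fun m hm => absurd hm (Nat.not_lt_zero _)
  | succ N ih =>
    intro m hm k
    rcases (Nat.lt_succ_iff.mp hm).lt_or_eq with hlt | rfl
    · exact ih m hlt k
    by_cases hz : degZ m = 0
    · rw [hφh k m hz, hψh k m hz]
    have hdefect := h.coeff_sub_eq_of_agreeBelow h' hφ hψ ih k
    have hne : Complex.I * degZ m ≠ 0 := mul_ne_zero Complex.I_ne_zero (Nat.cast_ne_zero.mpr hz)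
    exact mul_left_cancel₀ hne (by linear_combination -hdefect)

end IsEulerTransversal

/-- Formulas (6.6)–(6.9): for `L̃^w = i(1−iφ_u)⁻¹φ_z·e(z)`, one has
`L̃^w_{z^a z̄^b u^c} = i a φ_{z^a z̄^b u^c} + R_{a,b,c}(φ_*)` with `R_{a,b,c}` depending only
on the derivatives of `φ` of order `< a+b+c` (expressed here by saying that the defect
`L̃^w_{z^a z̄^b u^c} − i a φ_{z^a z̄^b u^c}` agrees for any two `φ`'s with the same lower-order
derivatives); consequently `L̃^w` together with the no-harmonic-terms normalization
`φ_{z̄^b u^c} = 0` determines `φ` uniquely. -/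
theorem stmt17 (n d : ℕ)
    (φ ψ Ltφ Ltψ : Fin d → MvPowerSeries (Var n d) ℂ)
    (hφ0 : NoConstLin φ) (hψ0 : NoConstLin ψ)
    (hφL : IsEulerTransversal φ Ltφ) (hψL : IsEulerTransversal ψ Ltψ) :
    -- the defect depends only on the lower-order derivatives of φ
    (∀ a b c : ℕ, 1 ≤ a →
      (∀ a' b' c' : ℕ, a' + b' + c' < a + b + c →
        ∀ k, dpoly a' b' c' (φ k) = dpoly a' b' c' (ψ k)) →
      ∀ k, dpoly a b c (Ltφ k) - (Complex.I * a) • dpoly a b c (φ k) =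
        dpoly a b c (Ltψ k) - (Complex.I * a) • dpoly a b c (ψ k)) ∧
    -- uniqueness of φ given L̃^w and the no-harmonic-terms condition
    ((∀ (k : Fin d) (m : Var n d →₀ ℕ), degZ m = 0 → MvPowerSeries.coeff m (φ k) = 0) →
     (∀ (k : Fin d) (m : Var n d →₀ ℕ), degZ m = 0 → MvPowerSeries.coeff m (ψ k) = 0) →
     Ltφ = Ltψ → φ = ψ) := by
  refine ⟨fun a b c _ hlow k =>
    hφL.dpoly_sub_eq_of_agreeBelow hψL hφ0 hψ0 (agreeBelow_of_dpoly_eq hlow) k, ?_⟩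
  rintro hφh hψh rfl
  exact hφL.eq_of_coeff_degZ_eq_zero hψL hφ0 hψ0 hφh hψh
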